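/- For the complete graph K_n (n ≥ 2), the minimum over all adjacent 1-common edge-colorings f of the maximum color used equals n(n−1)/2. -/

import Mathlib

/-- The set of colors appearing on edges incident with `x` under the edge coloring `f`. -/
def edgeColorSet {V : Type*} [Fintype V] [DecidableEq V]
    (G : SimpleGraph V) [DecidableRel G.Adj] (f : Sym2 V → ℕ) (x : V) : Finset ℕ :=
  (G.neighborFinset x).image (fun y => f s(x, y))

/-- An adjacent 1-common edge-coloring: a proper edge coloring with positive colors
such that for each edge `uv`, `|C(u) ∩ C(v)| = 1`, and for adjacent edges `uv`, `uw`,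
`C(u) ∩ C(v) ≠ C(u) ∩ C(w)`. -/
def IsAdjacentOneCommonEdgeColoring {V : Type*} [Fintype V] [DecidableEq V]
    (G : SimpleGraph V) [DecidableRel G.Adj] (f : Sym2 V → ℕ) : Prop :=
  (∀ u v : V, G.Adj u v → 1 ≤ f s(u, v)) ∧
  (∀ u v w : V, G.Adj u v → G.Adj u w → v ≠ w → f s(u, v) ≠ f s(u, w)) ∧
  (∀ u v : V, G.Adj u v → (edgeColorSet G f u ∩ edgeColorSet G f v).card = 1) ∧
  (∀ u v w : V, G.Adj u v → G.Adj u w → v ≠ w →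
    edgeColorSet G f u ∩ edgeColorSet G f v ≠ edgeColorSet G f u ∩ edgeColorSet G f w)

/-! ### Auxiliary lemmas -/

lemma mem_edgeColorSet_top {n : ℕ} (f : Sym2 (Fin n) → ℕ) {x y : Fin n} (hxy : x ≠ y) :
    f s(x, y) ∈ edgeColorSet (⊤ : SimpleGraph (Fin n)) f x :=
  Finset.mem_image.mpr ⟨y, by simp [SimpleGraph.mem_neighborFinset, hxy, hxy.symm], rfl⟩

lemma inter_eq_singleton_of_valid {n : ℕ} {f : Sym2 (Fin n) → ℕ}
    (h : IsAdjacentOneCommonEdgeColoring (⊤ : SimpleGraph (Fin n)) f)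
    {u v : Fin n} (huv : u ≠ v) :
    edgeColorSet (⊤ : SimpleGraph (Fin n)) f u ∩ edgeColorSet (⊤ : SimpleGraph (Fin n)) f v
      = {f s(u, v)} := by
  obtain ⟨a, ha⟩ := Finset.card_eq_one.mp (h.2.2.1 u v (by simpa using huv))
  have hmem : f s(u, v) ∈ edgeColorSet (⊤ : SimpleGraph (Fin n)) f u ∩
      edgeColorSet (⊤ : SimpleGraph (Fin n)) f v := by
    refine Finset.mem_inter.mpr ⟨mem_edgeColorSet_top f huv, ?_⟩
    have := mem_edgeColorSet_top f huv.symm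
    rwa [Sym2.eq_swap] at this
  rw [ha] at hmem ⊢
  rw [Finset.mem_singleton] at hmem
  rw [hmem]

/-- Any valid coloring of `K_n` is injective on edges. -/
lemma color_inj_of_valid {n : ℕ} {f : Sym2 (Fin n) → ℕ}
    (h : IsAdjacentOneCommonEdgeColoring (⊤ : SimpleGraph (Fin n)) f)
    {u v x y : Fin n} (huv : u ≠ v) (hxy : x ≠ y)
    (hf : f s(u, v) = f s(x, y)) : s(u, v) = s(x, y) := by
  have adj : ∀ a b : Fin n, a ≠ b → (⊤ : SimpleGraph (Fin n)).Adj a b := by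
    intro a b hab; simpa using hab
  by_contra hne
  have hproper := h.2.1
  by_cases hux : u = x
  · subst hux
    have hvy : v ≠ y := fun hvy => hne (by rw [hvy])
    exact hproper u v y (adj _ _ huv) (adj _ _ hxy) hvy hf
  by_cases huy : u = y
  · subst huy
    have hvx : v ≠ x := fun hvx => hne (by rw [hvx, Sym2.eq_swap])
    exact hproper u v x (adj _ _ huv) (adj _ _ (Ne.symm hxy)) hvx
      (by rw [hf, Sym2.eq_swap])
  by_cases hvx : v = x
  · subst hvx
    have huy' : y ≠ u := fun h' => hne (by rw [← h', Sym2.eq_swap])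
    refine hproper v y u (adj _ _ hxy) (adj _ _ (Ne.symm huv)) huy' ?_
    rw [← hf, Sym2.eq_swap]
  by_cases hvy : v = y
  · subst hvy
    have hux' : u ≠ x := hux
    refine hproper v u x (adj _ _ (Ne.symm huv)) (adj _ _ (Ne.symm hxy)) hux' ?_
    rw [Sym2.eq_swap, hf, Sym2.eq_swap]
  -- disjoint case
  · have hcm : f s(u, v) ∈ edgeColorSet (⊤ : SimpleGraph (Fin n)) f u ∩
        edgeColorSet (⊤ : SimpleGraph (Fin n)) f x := by
      refine Finset.mem_inter.mpr ⟨mem_edgeColorSet_top f huv, ?_⟩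
      rw [hf]; exact mem_edgeColorSet_top f hxy
    rw [inter_eq_singleton_of_valid h hux, Finset.mem_singleton] at hcm
    exact hproper u v x (adj _ _ huv) (adj _ _ hux) hvx hcm

/-- Triangular-number based encoding is injective. -/
lemma tri_inj {a b a' b' : ℕ} (hab : a < b) (hab' : a' < b')
    (h : b.choose 2 + a = b'.choose 2 + a') : a = a' ∧ b = b' := by
  have key : ∀ c : ℕ, (c + 1).choose 2 = c.choose 2 + c := by
    intro c
    rw [Nat.choose_succ_succ c 1, Nat.choose_one_right, Nat.add_comm]
  have hbb : b = b' := by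
    rcases lt_trichotomy b b' with hlt | heq | hgt
    · exfalso
      have h1 : b.choose 2 + a < (b + 1).choose 2 := by rw [key]; omega
      have h2 : (b + 1).choose 2 ≤ b'.choose 2 := Nat.choose_le_choose 2 hlt
      omega
    · exact heq
    · exfalso
      have h1 : b'.choose 2 + a' < (b' + 1).choose 2 := by rw [key]; omega
      have h2 : (b' + 1).choose 2 ≤ b.choose 2 := Nat.choose_le_choose 2 hgt
      omega
  subst hbb
  omega

/-- The rainbow coloring of `K_n`. -/
def rbColor (n : ℕ) : Sym2 (Fin n) → ℕ :=
  Sym2.lift ⟨fun u v => (max u.val v.val).choose 2 + min u.val v.val + 1,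
    fun u v => by simp [sup_comm, inf_comm]⟩

lemma rbColor_mk {n : ℕ} (u v : Fin n) :
    rbColor n s(u, v) = (max u.val v.val).choose 2 + min u.val v.val + 1 := rfl

lemma rbColor_inj {n : ℕ} {u v x y : Fin n} (huv : u ≠ v) (hxy : x ≠ y)
    (hf : rbColor n s(u, v) = rbColor n s(x, y)) : s(u, v) = s(x, y) := by
  rw [rbColor_mk, rbColor_mk] at hf
  have h1 : min u.val v.val < max u.val v.val :=
    min_lt_max.mpr (fun h => huv (Fin.ext h))
  have h2 : min x.val y.val < max x.val y.val :=
    min_lt_max.mpr (fun h => hxy (Fin.ext h))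
  have := tri_inj h1 h2 (by omega)
  have hcase : (u.val = x.val ∧ v.val = y.val) ∨ (u.val = y.val ∧ v.val = x.val) := by
    omega
  rw [Sym2.eq_iff]
  rcases hcase with ⟨ha, hb⟩ | ⟨ha, hb⟩
  · exact Or.inl ⟨Fin.ext ha, Fin.ext hb⟩
  · exact Or.inr ⟨Fin.ext ha, Fin.ext hb⟩

lemma rbColor_valid (n : ℕ) :
    IsAdjacentOneCommonEdgeColoring (⊤ : SimpleGraph (Fin n)) (rbColor n) := by
  have adj : ∀ a b : Fin n, (⊤ : SimpleGraph (Fin n)).Adj a b ↔ a ≠ b := by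
    intro a b; simp
  have hproper : ∀ u v w : Fin n, (⊤ : SimpleGraph (Fin n)).Adj u v →
      (⊤ : SimpleGraph (Fin n)).Adj u w → v ≠ w →
      rbColor n s(u, v) ≠ rbColor n s(u, w) := by
    intro u v w huv huw hvw hf
    rw [adj] at huv huw
    have := rbColor_inj huv huw hf
    rw [Sym2.eq_iff] at this
    rcases this with ⟨_, h⟩ | ⟨h1, h2⟩
    · exact hvw h
    · exact hvw (h2.trans h1)
  have hsingle : ∀ u v : Fin n, u ≠ v →
      edgeColorSet (⊤ : SimpleGraph (Fin n)) (rbColor n) u ∩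
        edgeColorSet (⊤ : SimpleGraph (Fin n)) (rbColor n) v = {rbColor n s(u, v)} := by
    intro u v huv
    apply Finset.Subset.antisymm
    · intro c hc
      rw [Finset.mem_inter] at hc
      obtain ⟨y, hy, hcy⟩ := Finset.mem_image.mp hc.1
      obtain ⟨z, hz, hcz⟩ := Finset.mem_image.mp hc.2
      rw [SimpleGraph.mem_neighborFinset, adj] at hy hz
      have heq : s(u, y) = s(v, z) := rbColor_inj hy hz
        (hcy.trans hcz.symm)
      rw [Sym2.eq_iff] at heq
      rcases heq with ⟨h1, _⟩ | ⟨_, h2⟩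
      · exact absurd h1 huv
      · rw [Finset.mem_singleton, ← hcy, h2]
    · intro c hc
      rw [Finset.mem_singleton] at hc
      subst hc
      refine Finset.mem_inter.mpr ⟨mem_edgeColorSet_top _ huv, ?_⟩
      have := mem_edgeColorSet_top (rbColor n) huv.symm
      rwa [Sym2.eq_swap] at this
  refine ⟨fun u v _ => by rw [rbColor_mk]; omega, hproper, ?_, ?_⟩
  · intro u v huv
    rw [adj] at huv
    rw [hsingle u v huv, Finset.card_singleton]
  · intro u v w huv huw hvw
    rw [adj] at huv huw
    rw [hsingle u v huv, hsingle u w huw]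
    intro hcontr
    rw [Finset.singleton_inj] at hcontr
    exact hproper u v w (by simpa using huv) (by simpa using huw) hvw hcontr

lemma rbColor_le {n : ℕ} {u v : Fin n} (huv : u ≠ v) :
    rbColor n s(u, v) ≤ n * (n - 1) / 2 := by
  rw [rbColor_mk, ← Nat.choose_two_right]
  set a := min u.val v.val
  set b := max u.val v.val
  have hab : a < b := min_lt_max.mpr (fun h => huv (Fin.ext h))
  have hbn : b < n := by
    rcases max_cases u.val v.val with ⟨h, _⟩ | ⟨h, _⟩ <;> rw [show b = _ from h]
    · exact u.isLt
    · exact v.isLt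
  have key : (b + 1).choose 2 = b.choose 2 + b := by
    rw [Nat.choose_succ_succ b 1, Nat.choose_one_right, Nat.add_comm]
  have h1 : b.choose 2 + a + 1 ≤ (b + 1).choose 2 := by rw [key]; omega
  have h2 : (b + 1).choose 2 ≤ n.choose 2 := Nat.choose_le_choose 2 hbn
  omega

/-- For the complete graph `K_n` (`n ≥ 2`), the minimum over all adjacent
1-common edge-colorings of the maximum color used equals `n(n−1)/2`. -/
theorem chi_set_of_complete_graph (n : ℕ) (hn : 2 ≤ n) :
    sInf {M : ℕ | ∃ f : Sym2 (Fin n) → ℕ,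
        IsAdjacentOneCommonEdgeColoring (⊤ : SimpleGraph (Fin n)) f ∧
        ∀ u v : Fin n, (⊤ : SimpleGraph (Fin n)).Adj u v → f s(u, v) ≤ M}
      = n * (n - 1) / 2 := by
  have hmem : n * (n - 1) / 2 ∈ {M : ℕ | ∃ f : Sym2 (Fin n) → ℕ,
      IsAdjacentOneCommonEdgeColoring (⊤ : SimpleGraph (Fin n)) f ∧
      ∀ u v : Fin n, (⊤ : SimpleGraph (Fin n)).Adj u v → f s(u, v) ≤ M} := by
    refine ⟨rbColor n, rbColor_valid n, fun u v huv => rbColor_le (by simpa using huv)⟩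
  apply le_antisymm
  · exact Nat.sInf_le hmem
  · refine le_csInf ⟨_, hmem⟩ ?_
    rintro M ⟨f, hvalid, hbound⟩
    -- f is injective on the edge set, all colors in [1, M]
    have hinj : Set.InjOn f ((⊤ : SimpleGraph (Fin n)).edgeFinset :
        Set (Sym2 (Fin n))) := by
      intro e1 he1 e2 he2 hfe
      induction e1 using Sym2.ind with
      | _ u v =>
      induction e2 using Sym2.ind with
      | _ x y =>
      rw [Finset.mem_coe, SimpleGraph.mem_edgeFinset, SimpleGraph.mem_edgeSet] at he1 he2
      exact color_inj_of_valid hvalid (by simpa using he1) (by simpa using he2) hfe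
    have hcard : ((⊤ : SimpleGraph (Fin n)).edgeFinset.image f).card = n.choose 2 := by
      rw [Finset.card_image_of_injOn hinj,
        SimpleGraph.card_edgeFinset_top_eq_card_choose_two, Fintype.card_fin]
    have hsub : (⊤ : SimpleGraph (Fin n)).edgeFinset.image f ⊆ Finset.Icc 1 M := by
      intro c hc
      obtain ⟨e, he, hce⟩ := Finset.mem_image.mp hc
      induction e using Sym2.ind with
      | _ u v =>
      rw [SimpleGraph.mem_edgeFinset, SimpleGraph.mem_edgeSet] at he
      rw [Finset.mem_Icc, ← hce]
      exact ⟨hvalid.1 u v he, hbound u v he⟩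
    have := Finset.card_le_card hsub
    rw [hcard, Nat.card_Icc] at this
    rw [← Nat.choose_two_right]
    omega
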